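/- Let T_red be a binary tree where each internal node's point set of size m is split into two parts each of size at most ⌈m/2⌉, with root set of size n. If every leaf is 'full' (holds exactly as many indices as points) and each index is assigned to exactly one leaf, then Σ_{leaves B} |B|·depth(B) ≥ c·Σ_{leaves B} |B|·log₂(n/|B|) for an absolute constant c > 0, where |B| denotes the number of points in leaf B. -/

import Mathlib

open Classical

noncomputable section

abbrev Pt := ℝ × ℝ

/-- A binary split tree over finite planar point sets. -/
inductive SplitTree
  | leaf : Finset Pt → SplitTree
  | node : SplitTree → SplitTree → SplitTree

/-- The point set of a split tree. -/
def SplitTree.pts : SplitTree → Finset Pt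
  | .leaf s => s
  | .node l r => l.pts ∪ r.pts

/-- Validity: at every internal node the point set is split into two disjoint parts,
each of size at most `⌈m/2⌉`. -/
def SplitTree.valid : SplitTree → Prop
  | .leaf _ => True
  | .node l r => Disjoint l.pts r.pts ∧
      l.pts.card ≤ ((l.pts ∪ r.pts).card + 1) / 2 ∧
      r.pts.card ≤ ((l.pts ∪ r.pts).card + 1) / 2 ∧
      l.valid ∧ r.valid

/-- Sum over the leaves of `f` applied to the leaf's point set and its depth. -/
def SplitTree.leafSum (f : Finset Pt → ℕ → ℝ) : SplitTree → ℕ → ℝ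
  | .leaf s, d => f s d
  | .node l r, d => l.leafSum f (d + 1) + r.leafSum f (d + 1)
/-!
Since both children of a node hold at most `⌈m/2⌉` of its `m` points, each holds at least
`⌊m/2⌋`, so a nonempty child holds at least a quarter of its parent's points. A nonempty leaf at
depth `k` therefore holds at least `n / 4 ^ k` points, i.e. `log₂ (n / |B|) ≤ 2 k`, and summing
`|B| log₂ (n / |B|) ≤ 2 |B| depth(B)` over the leaves gives the bound with `c = 1 / 2`.
-/

namespace SplitTree

def leaves : SplitTree → List (Finset Pt × ℕ)
  | .leaf s => [(s, 0)]
  | .node l r => (l.leaves ++ r.leaves).map fun p => (p.1, p.2 + 1)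

theorem leafSum_eq_sum_leaves (f : Finset Pt → ℕ → ℝ) :
    ∀ (T : SplitTree) (d : ℕ), T.leafSum f d = (T.leaves.map fun p => f p.1 (p.2 + d)).sum
  | .leaf s, d => by simp [leafSum, leaves]
  | .node l r, d => by
    simp only [leafSum, leaves, leafSum_eq_sum_leaves f l, leafSum_eq_sum_leaves f r,
      List.map_map, List.map_append, List.sum_append, Function.comp_def,
      Nat.add_right_comm _ 1 d, Nat.add_assoc]

theorem subset_pts_of_mem_leaves {s : Finset Pt} {k : ℕ} :
    ∀ {T : SplitTree}, (s, k) ∈ T.leaves → s ⊆ T.pts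
  | .leaf t, h => by simp_all [leaves, pts]
  | .node l r, h => by
    simp only [leaves, List.mem_map, List.mem_append, Prod.mk.injEq] at h
    obtain ⟨⟨t, j⟩, hl | hr, rfl, -⟩ := h
    · exact (subset_pts_of_mem_leaves hl).trans Finset.subset_union_left
    · exact (subset_pts_of_mem_leaves hr).trans Finset.subset_union_right

theorem card_pts_node_le {l r : SplitTree} (h : (node l r).valid) :
    (node l r).pts.card ≤ 2 * l.pts.card + 1 ∧ (node l r).pts.card ≤ 2 * r.pts.card + 1 := by
  obtain ⟨hdisj, hl, hr, -⟩ := h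
  simp only [pts, Finset.card_union_of_disjoint hdisj] at hl hr ⊢
  omega

theorem card_pts_le_four_pow_mul_card {s : Finset Pt} (hs : s.Nonempty) :
    ∀ {T : SplitTree} {k : ℕ}, T.valid → (s, k) ∈ T.leaves → T.pts.card ≤ 4 ^ k * s.card
  | .leaf t, k, _, h => by simp_all [leaves, pts]
  | .node l r, k, hT, h => by
    simp only [leaves, List.mem_map, List.mem_append, Prod.mk.injEq] at h
    obtain ⟨⟨t, j⟩, hj, rfl, rfl⟩ := h
    obtain ⟨hnl, hnr⟩ := card_pts_node_le hT
    have hm := hs.card_pos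
    rw [pow_succ]
    rcases hj with hl | hr
    · have := card_pts_le_four_pow_mul_card hs hT.2.2.2.1 hl
      have := Finset.card_le_card (subset_pts_of_mem_leaves hl)
      nlinarith
    · have := card_pts_le_four_pow_mul_card hs hT.2.2.2.2 hr
      have := Finset.card_le_card (subset_pts_of_mem_leaves hr)
      nlinarith

end SplitTree

theorem mul_logb_two_div_le_of_le_four_pow_mul {n m k : ℕ} (h : n ≤ 4 ^ k * m) :
    (m : ℝ) * Real.logb 2 (n / m) ≤ 2 * (m * k) := by
  rcases Nat.eq_zero_or_pos n with rfl | hn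
  · simp only [Nat.cast_zero, zero_div, Real.logb_zero, mul_zero]
    positivity
  have hm : 0 < m := Nat.pos_of_ne_zero (by rintro rfl; omega)
  have hlog : Real.logb 2 (n / m) ≤ 2 * k := by
    calc Real.logb 2 (n / m) ≤ Real.logb 2 ((4 : ℝ) ^ k) := by
          refine Real.logb_le_logb_of_le one_lt_two (by positivity) ?_
          rw [div_le_iff₀ (by positivity)]
          exact_mod_cast h
      _ = 2 * k := by
          rw [show (4 : ℝ) = 2 ^ 2 by norm_num, ← pow_mul, Real.logb_pow,
            Real.logb_self_eq_one one_lt_two]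
          push_cast
          ring
  nlinarith [(Nat.cast_pos.mpr hm : (0 : ℝ) < m)]

theorem stmt19 : ∃ c : ℝ, 0 < c ∧
    ∀ T : SplitTree, T.valid →
      c * T.leafSum (fun s _ => (s.card : ℝ) *
            Real.logb 2 ((T.pts.card : ℝ) / (s.card : ℝ))) 0
        ≤ T.leafSum (fun s d => (s.card : ℝ) * (d : ℝ)) 0 := by
  refine ⟨1 / 2, one_half_pos, fun T hT => ?_⟩
  simp only [SplitTree.leafSum_eq_sum_leaves, add_zero, ← List.sum_map_mul_left]
  refine List.sum_le_sum fun ⟨s, k⟩ hsk => ?_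
  rcases s.eq_empty_or_nonempty with rfl | hs
  · simp
  · have := mul_logb_two_div_le_of_le_four_pow_mul
      (SplitTree.card_pts_le_four_pow_mul_card hs hT hsk)
    dsimp only
    linarith
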